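/- arXiv:1907.11365 — 8 statements merged into one kernel-verified Lean document; each statement's English description precedes it below -/
import Mathlib

section
/- Every K-linear automorphism σ of 𝒞ₙ (a K-linear functor 𝒞ₙ → 𝒞ₙ which is an isomorphism of categories) is given on objects by a permutation σ of [n] and on morphisms by σ(x_{ij}) = a_{ij}·x_{σ(i)σ(j)} for all i,j, where (a_{ij}) is a multiplicative system of scalars and (x_{ij}) is the canonical multiplicative basis. Conversely, every permutation of [n] together with every multiplicative system of scalars defines a K-linear automorphism of 𝒞ₙ in this way. -/
open CategoryTheory

/-- The category `𝒞ₙ`: objects are `Fin n`, every hom-space is the one-dimensional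
`K`-vector space `K`, and composition is multiplication in `K` (so the identity of
every object is `1 : K`). -/
def Cn (K : Type) (n : ℕ) : Type := Fin n

section CnSetup

variable {K : Type} [Field K] {n : ℕ}

instance : Category (Cn K n) where
  Hom _ _ := K
  id _ := (1 : K)
  comp f g := @HMul.hMul K K K _ f g
  id_comp f := @one_mul K _ f
  comp_id f := @mul_one K _ f
  assoc f g h := @mul_assoc K _ f g h

instance : Preadditive (Cn K n) where
  homGroup _ _ := inferInstanceAs (AddCommGroup K)
  add_comp _ _ _ f f' g := @add_mul K _ _ _ f f' g
  comp_add _ _ _ f g g' := @mul_add K _ _ _ f g g'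

instance : CategoryTheory.Linear K (Cn K n) where
  homModule _ _ := inferInstanceAs (Module K K)
  smul_comp _ _ _ r f g := @smul_mul_assoc K K _ _ _ r f g
  comp_smul _ _ _ f r g := @mul_smul_comm K K _ _ _ r f g

/-- The morphism `X ⟶ Y` of `𝒞ₙ` given by the scalar `r`.  In particular
`CnHom j i 1` is the canonical basic morphism `x_{ij} : j ⟶ i`. -/
def CnHom (X Y : Cn K n) (r : K) : X ⟶ Y := r

/-- The scalar underlying a morphism of `𝒞ₙ`. -/
def toK {X Y : Cn K n} (f : X ⟶ Y) : K := f

end CnSetup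

/-- A functor between `K`-linear categories is `K`-linear if it is additive on hom-spaces
and commutes with the action of `K` on hom-spaces. -/
def IsKLinearFunctor (K : Type) [Field K] {C D : Type*} [Category C] [Category D]
    [Preadditive C] [Preadditive D] [CategoryTheory.Linear K C] [CategoryTheory.Linear K D]
    (F : C ⥤ D) : Prop :=
  (∀ (X Y : C) (f g : X ⟶ Y), F.map (f + g) = F.map f + F.map g) ∧
  (∀ (X Y : C) (r : K) (f : X ⟶ Y), F.map (r • f) = r • F.map f)


section Helpers

variable {K : Type} [Field K] {n : ℕ}

lemma Cn_hom_ext {X Y : Cn K n} (f g : X ⟶ Y) (h : toK f = toK g) : f = g := h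

lemma Cn_comp_toK {X Y Z : Cn K n} (f : X ⟶ Y) (g : Y ⟶ Z) :
    toK (f ≫ g) = toK f * toK g := rfl

lemma Cn_eqToHom_toK {X Y : Cn K n} (h : X = Y) : toK (eqToHom h) = 1 := by
  subst h; rfl

/-- Build a functor `𝒞ₙ ⥤ 𝒞ₙ` from an object map and a multiplicative system. -/
def mkFunctor (τ : Cn K n → Cn K n) (b : Cn K n → Cn K n → K)
    (hb1 : ∀ i, b i i = 1) (hbm : ∀ i j k, b i j * b j k = b i k) :
    Cn K n ⥤ Cn K n where
  obj := τ
  map {X Y} f := CnHom (τ X) (τ Y) (b Y X * toK f)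
  map_id X := by
    apply Cn_hom_ext
    show b X X * (1 : K) = 1
    rw [hb1, mul_one]
  map_comp {X Y Z} f g := by
    apply Cn_hom_ext
    show b Z X * (toK f * toK g) = (b Y X * toK f) * (b Z Y * toK g)
    rw [← hbm Z Y X]; ring

lemma mkFunctor_linear (τ : Cn K n → Cn K n) (b : Cn K n → Cn K n → K)
    (hb1 : ∀ i, b i i = 1) (hbm : ∀ i j k, b i j * b j k = b i k) :
    IsKLinearFunctor K (mkFunctor τ b hb1 hbm) := by
  constructor
  · intro X Y f g
    apply Cn_hom_ext
    show b Y X * (toK f + toK g) = b Y X * toK f + b Y X * toK g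
    ring
  · intro X Y r f
    apply Cn_hom_ext
    show b Y X * (r * toK f) = r * (b Y X * toK f)
    ring

end Helpers

/-- **Corollary (automorphisms of `𝒞ₙ`).**  Every `K`-linear automorphism of `𝒞ₙ` is given
on objects by a permutation `σ` of `[n]` and on morphisms by a multiplicative system of
nonzero scalars `a i j` (via `F (x_{ij}) = a_{ij} • x_{σ(i) σ(j)}`); conversely every
permutation together with every multiplicative system of scalars arises this way. -/
theorem stmt2 (K : Type) [Field K] (n : ℕ) :
    (∀ F : Cn K n ⥤ Cn K n, IsKLinearFunctor K F →
      (∃ G : Cn K n ⥤ Cn K n, F ⋙ G = 𝟭 (Cn K n) ∧ G ⋙ F = 𝟭 (Cn K n)) →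
      ∃ (σ : Equiv.Perm (Fin n)) (a : Cn K n → Cn K n → K),
        (∀ i j, a i j ≠ 0) ∧ (∀ i j k, a i j * a j k = a i k) ∧
        (∀ i : Cn K n, F.obj i = σ i) ∧
        (∀ i j : Cn K n, F.map (CnHom j i 1) = CnHom (F.obj j) (F.obj i) (a i j))) ∧
    (∀ (σ : Equiv.Perm (Fin n)) (a : Cn K n → Cn K n → K),
      (∀ i j, a i j ≠ 0) → (∀ i j k, a i j * a j k = a i k) →
      ∃ F : Cn K n ⥤ Cn K n, IsKLinearFunctor K F ∧
        (∃ G : Cn K n ⥤ Cn K n, F ⋙ G = 𝟭 (Cn K n) ∧ G ⋙ F = 𝟭 (Cn K n)) ∧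
        (∀ i : Cn K n, F.obj i = σ i) ∧
        (∀ i j : Cn K n, F.map (CnHom j i 1) = CnHom (F.obj j) (F.obj i) (a i j))) := by
  constructor
  · -- forward direction
    rintro F hF ⟨G, hFG, hGF⟩
    have hGFo : ∀ i : Cn K n, G.obj (F.obj i) = i := fun i => Functor.congr_obj hFG i
    have hFGo : ∀ i : Cn K n, F.obj (G.obj i) = i := fun i => Functor.congr_obj hGF i
    have hmul : ∀ i j k : Cn K n, toK (F.map (CnHom j i 1)) * toK (F.map (CnHom k j 1))
        = toK (F.map (CnHom k i 1)) := by
      intro i j k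
      have key : (CnHom k j (1:K)) ≫ (CnHom j i 1) = CnHom k i 1 :=
        Cn_hom_ext _ _ (mul_one 1)
      calc toK (F.map (CnHom j i 1)) * toK (F.map (CnHom k j 1))
          = toK (F.map (CnHom k j 1) ≫ F.map (CnHom j i 1)) := (mul_comm _ _).trans rfl
        _ = toK (F.map (CnHom k j 1 ≫ CnHom j i 1)) := by rw [F.map_comp]
        _ = toK (F.map (CnHom k i 1)) := by rw [key]
    refine ⟨⟨F.obj, G.obj, hGFo, hFGo⟩, fun i j => toK (F.map (CnHom j i 1)), ?_, hmul, fun i => rfl, fun i j => rfl⟩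
    intro i j
    have hone : toK (F.map (CnHom i i (1:K))) = 1 := by
      have : CnHom i i (1:K) = 𝟙 i := rfl
      rw [this, F.map_id]; rfl
    have := hmul i j i
    rw [hone] at this
    exact left_ne_zero_of_mul_eq_one this
  · -- converse direction
    intro σ a ha hm
    have ha1 : ∀ i : Cn K n, a i i = 1 := by
      intro i
      have := hm i i i
      exact mul_left_cancel₀ (ha i i) (by rw [this, mul_one])
    set b : Cn K n → Cn K n → K := fun i j => (a (σ.symm i) (σ.symm j))⁻¹ with hb
    have hb1 : ∀ i : Cn K n, b i i = 1 := fun i => by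
      simp [hb, ha1]
      exact ha1 _
    have hbm : ∀ i j k : Cn K n, b i j * b j k = b i k := fun i j k => by
      simp only [hb]
      rw [← hm (σ.symm i) (σ.symm j) (σ.symm k), mul_inv]
    refine ⟨mkFunctor σ a ha1 hm, mkFunctor_linear σ a ha1 hm,
      ⟨mkFunctor σ.symm b hb1 hbm, ?_, ?_⟩, fun i => rfl, fun i j => ?_⟩
    · refine CategoryTheory.Functor.ext ?_ ?_
      case right.refine_1.refine_1 => intro X; exact σ.symm_apply_apply X
      intro X Y f
      apply Cn_hom_ext
      rw [Cn_comp_toK, Cn_comp_toK, Cn_eqToHom_toK]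
      erw [Cn_eqToHom_toK]
      show b (σ Y) (σ X) * (a Y X * toK f) = 1 * (toK f * 1)
      simp only [hb, Equiv.symm_apply_apply]
      field_simp
      erw [Equiv.symm_apply_apply, Equiv.symm_apply_apply]
      exact mul_div_cancel_left₀ _ (ha _ _)
    · refine CategoryTheory.Functor.ext ?_ ?_
      case right.refine_2.refine_1 => intro X; exact σ.apply_symm_apply X
      intro X Y f
      apply Cn_hom_ext
      rw [Cn_comp_toK, Cn_comp_toK, Cn_eqToHom_toK]
      erw [Cn_eqToHom_toK]
      show a (σ.symm Y) (σ.symm X) * (b Y X * toK f) = 1 * (toK f * 1)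
      simp only [hb]
      field_simp
      exact mul_div_cancel_left₀ _ (ha _ _)
    · apply Cn_hom_ext
      show a i j * (1:K) = a i j
      rw [mul_one]
end

section
/- Let σ, τ be K-linear autoequivalences of 𝒞ₙ with transition coefficients a_{ji} and b_{ji} respectively (with respect to the canonical multiplicative basis). Then: (i) there exist c_i ∈ K∖{0} with c_j·a_{ji} = b_{ji}·c_i for all i,j, and any two such tuples (c_i) differ by multiplication by a single nonzero scalar; (ii) each such tuple defines a natural isomorphism φ : σ → τ by φ_i = c_i·x_{τ(i)σ(i)} : σ(i) → τ(i); and (iii) every natural isomorphism σ → τ arises in this way. -/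
open CategoryTheory

section Aux

variable {K : Type} [Field K] {n : ℕ}

theorem Cn.toK_eq {X Y : Cn K n} (f : X ⟶ Y) : f = CnHom X Y (toK f) := rfl

theorem Cn.cocycle (F : Cn K n ⥤ Cn K n) (a : Cn K n → Cn K n → K)
    (hFa : ∀ i j : Cn K n, F.map (CnHom j i 1) = CnHom (F.obj j) (F.obj i) (a i j))
    (i j k : Cn K n) : a k i = a j i * a k j := by
  have h : (CnHom i j 1 : i ⟶ j) ≫ (CnHom j k 1) = CnHom i k 1 := mul_one (1 : K)
  have h2 := F.map_comp (CnHom i j 1) (CnHom j k 1)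
  rw [h, hFa, hFa, hFa] at h2
  exact h2

theorem Cn.diag (F : Cn K n ⥤ Cn K n) (a : Cn K n → Cn K n → K)
    (hFa : ∀ i j : Cn K n, F.map (CnHom j i 1) = CnHom (F.obj j) (F.obj i) (a i j))
    (i : Cn K n) : a i i = 1 := by
  have h := hFa i i
  rw [show (CnHom i i 1 : i ⟶ i) = 𝟙 i from rfl, F.map_id] at h
  exact h.symm

theorem Cn.mul_inv (F : Cn K n ⥤ Cn K n) (a : Cn K n → Cn K n → K)
    (hFa : ∀ i j : Cn K n, F.map (CnHom j i 1) = CnHom (F.obj j) (F.obj i) (a i j))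
    (i j : Cn K n) : a j i * a i j = 1 := by
  have h := Cn.cocycle F a hFa i j i
  rw [Cn.diag F a hFa i] at h
  exact h.symm

theorem Cn.nz (F : Cn K n ⥤ Cn K n) (a : Cn K n → Cn K n → K)
    (hFa : ∀ i j : Cn K n, F.map (CnHom j i 1) = CnHom (F.obj j) (F.obj i) (a i j))
    (i j : Cn K n) : a i j ≠ 0 :=
  right_ne_zero_of_mul_eq_one (Cn.mul_inv F a hFa i j)

theorem Cn.map_scalar (F : Cn K n ⥤ Cn K n) (hF : IsKLinearFunctor K F)
    (a : Cn K n → Cn K n → K)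
    (hFa : ∀ i j : Cn K n, F.map (CnHom j i 1) = CnHom (F.obj j) (F.obj i) (a i j))
    (i j : Cn K n) (r : K) :
    F.map (CnHom j i r) = CnHom (F.obj j) (F.obj i) (r * a i j) := by
  have h : (CnHom j i r : j ⟶ i) = r • (CnHom j i 1 : j ⟶ i) := (mul_one r).symm
  rw [h, hF.2, hFa]
  rfl

end Aux

/-- **Proposition (natural isomorphisms are unique up to rescaling).**  Let `σ, τ` be
`K`-linear autoequivalences of `𝒞ₙ` with transition coefficients `a`, `b`.  Then (i) there
are nonzero scalars `c i` with `c j * a j i = b j i * c i`, unique up to a global nonzero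
scalar; (ii) each such tuple defines a natural isomorphism `φ : σ ≅ τ` with
`φ_i = c i • x_{τ(i) σ(i)}`; (iii) every natural isomorphism `σ ≅ τ` arises this way. -/
theorem stmt5 (K : Type) [Field K] (n : ℕ)
    (σ τ : Cn K n ⥤ Cn K n)
    (hσl : IsKLinearFunctor K σ) (hτl : IsKLinearFunctor K τ)
    (hσe : σ.IsEquivalence) (hτe : τ.IsEquivalence)
    (a b : Cn K n → Cn K n → K)
    (ha : ∀ i j : Cn K n, σ.map (CnHom j i 1) = CnHom (σ.obj j) (σ.obj i) (a i j))
    (hb : ∀ i j : Cn K n, τ.map (CnHom j i 1) = CnHom (τ.obj j) (τ.obj i) (b i j)) :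
    (∃ c : Cn K n → K, (∀ i, c i ≠ 0) ∧ ∀ i j : Cn K n, c j * a j i = b j i * c i) ∧
    (∀ c c' : Cn K n → K, (∀ i, c i ≠ 0) → (∀ i, c' i ≠ 0) →
      (∀ i j : Cn K n, c j * a j i = b j i * c i) →
      (∀ i j : Cn K n, c' j * a j i = b j i * c' i) →
      ∃ r : K, r ≠ 0 ∧ ∀ i, c' i = r * c i) ∧
    (∀ c : Cn K n → K, (∀ i, c i ≠ 0) →
      (∀ i j : Cn K n, c j * a j i = b j i * c i) →
      ∃ φ : σ ≅ τ, ∀ i : Cn K n, φ.hom.app i = CnHom (σ.obj i) (τ.obj i) (c i)) ∧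
    (∀ φ : σ ≅ τ, ∃ c : Cn K n → K, (∀ i, c i ≠ 0) ∧
      (∀ i j : Cn K n, c j * a j i = b j i * c i) ∧
      ∀ i : Cn K n, φ.hom.app i = CnHom (σ.obj i) (τ.obj i) (c i)) := by
  have haNZ : ∀ i j : Cn K n, a i j ≠ 0 := Cn.nz σ a ha
  have hbNZ : ∀ i j : Cn K n, b i j ≠ 0 := Cn.nz τ b hb
  refine ⟨?_, ?_, ?_, ?_⟩
  · -- existence
    rcases Nat.eq_zero_or_pos n with h0 | hpos
    · subst h0
      exact ⟨fun _ => 1, fun i => Fin.elim0 i, fun i => Fin.elim0 i⟩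
    · set i₀ : Cn K n := (⟨0, hpos⟩ : Fin n) with hi₀
      refine ⟨fun i => b i i₀ * (a i i₀)⁻¹, fun i => mul_ne_zero (hbNZ i i₀) (inv_ne_zero (haNZ i i₀)), fun i j => ?_⟩
      have h1 : a j i₀ = a i i₀ * a j i := Cn.cocycle σ a ha i₀ i j
      have h2 : b j i₀ = b i i₀ * b j i := Cn.cocycle τ b hb i₀ i j
      show b j i₀ * (a j i₀)⁻¹ * a j i = b j i * (b i i₀ * (a i i₀)⁻¹)
      rw [h1, h2]
      field_simp [haNZ i i₀, haNZ j i]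
  · -- uniqueness
    intro c c' hc hc' hrel hrel'
    rcases Nat.eq_zero_or_pos n with h0 | hpos
    · subst h0
      exact ⟨1, one_ne_zero, fun i => Fin.elim0 i⟩
    · set i₀ : Cn K n := (⟨0, hpos⟩ : Fin n) with hi₀
      refine ⟨c' i₀ * (c i₀)⁻¹, mul_ne_zero (hc' i₀) (inv_ne_zero (hc i₀)), fun i => ?_⟩
      have h1 := hrel i₀ i
      have h2 := hrel' i₀ i
      have key : c' i * c i₀ * a i i₀ = c' i₀ * c i * a i i₀ := by
        linear_combination c i₀ * h2 - c' i₀ * h1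
      have key2 : c' i * c i₀ = c' i₀ * c i := mul_right_cancel₀ (haNZ i i₀) key
      calc c' i = c' i * c i₀ * (c i₀)⁻¹ := by
            rw [mul_assoc, mul_inv_cancel₀ (hc i₀), mul_one]
        _ = c' i₀ * c i * (c i₀)⁻¹ := by rw [key2]
        _ = c' i₀ * (c i₀)⁻¹ * c i := by ring

  · -- construction of natural iso
    intro c hc hrel
    refine ⟨NatIso.ofComponents
      (fun i => ⟨CnHom (σ.obj i) (τ.obj i) (c i), CnHom (τ.obj i) (σ.obj i) (c i)⁻¹, ?_, ?_⟩)
      ?_, fun i => rfl⟩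
    · exact mul_inv_cancel₀ (hc _)
    · exact inv_mul_cancel₀ (hc _)
    · intro X Y f
      have hf : σ.map f = CnHom (σ.obj X) (σ.obj Y) (toK f * a Y X) := by
        rw [Cn.toK_eq f, Cn.map_scalar σ hσl a ha]; rfl
      have hg : τ.map f = CnHom (τ.obj X) (τ.obj Y) (toK f * b Y X) := by
        rw [Cn.toK_eq f, Cn.map_scalar τ hτl b hb]; rfl
      rw [hf, hg]
      show (toK f * a Y X) * c Y = c X * (toK f * b Y X)
      have h := hrel X Y
      linear_combination toK f * h
  · -- every natural iso arises this way
    intro φ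
    refine ⟨fun i => toK (φ.hom.app i), fun i => ?_, fun i j => ?_, fun i => rfl⟩
    · have h := NatTrans.congr_app φ.hom_inv_id i
      have h2 : toK (φ.hom.app i) * toK (φ.inv.app i) = 1 := h
      exact left_ne_zero_of_mul_eq_one h2
    · have h := φ.hom.naturality (CnHom i j 1 : i ⟶ j)
      rw [ha, hb] at h
      have h2 : a j i * toK (φ.hom.app j) = toK (φ.hom.app i) * b j i := h
      linear_combination h2
end

section
/- Let σ be a K-linear automorphism and τ a K-linear autoequivalence of 𝒞ₙ with στ = τσ. Then there exists a unique scalar s ∈ K∖{0} such that for every natural isomorphism φ : σ → τ and every object i, σ(φ_i) = s·φ_{σ(i)}. Consequently, the following are equivalent: (1) there exists a skew-continuous natural isomorphism φ : σ → τ; (2) every natural isomorphism σ → τ is skew-continuous; (3) s = −1. -/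
open CategoryTheory

/-!
A linear functor `F` on `𝒞ₙ` is determined by the scalars `u_F(X, Y)` by which it multiplies
the basic morphisms `X ⟶ Y`; they form a multiplicative cocycle, so they are nonzero.
Naturality of `φ : σ → τ` along the basic morphism `i ⟶ σ(i)` gives
`σ(φ_i) = s_i · φ_{σ(i)}` with `s_i = u_σ(i, τ i) / u_τ(i, σ i)`, and applying `στ = τσ` to the
basic morphism `j ⟶ i` shows that `s_i` does not depend on `i`. Natural isomorphisms `σ ≅ τ`
exist (with components `u_τ(i₀, X) · u_σ(X, i₀)`) and have nonzero components, which makes the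
factor unique and shows that any one of them is skew-continuous exactly when it is `-1`.
-/

namespace Cn

variable {K : Type} [Field K] {m n : ℕ}

lemma toK_injective {X Y : Cn K n} {f g : X ⟶ Y} (h : toK f = toK g) : f = g := h

lemma toK_CnHom (X Y : Cn K n) (r : K) : toK (CnHom X Y r) = r := rfl

lemma toK_comp {X Y Z : Cn K n} (f : X ⟶ Y) (g : Y ⟶ Z) : toK (f ≫ g) = toK f * toK g := rfl

lemma toK_app_ne_zero {C : Type*} [Category C] {F G : C ⥤ Cn K n} (φ : F ≅ G) (X : C) :
    toK (φ.hom.app X) ≠ 0 :=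
  left_ne_zero_of_mul_eq_one (congrArg toK (φ.hom_inv_id_app X))

def isoOfNeZero {X Y : Cn K n} (r : K) (hr : r ≠ 0) : X ≅ Y where
  hom := CnHom X Y r
  inv := CnHom Y X r⁻¹
  hom_inv_id := toK_injective (mul_inv_cancel₀ hr)
  inv_hom_id := toK_injective (inv_mul_cancel₀ hr)

lemma toK_isoOfNeZero_hom {X Y : Cn K n} (r : K) (hr : r ≠ 0) :
    toK (isoOfNeZero (X := X) (Y := Y) r hr).hom = r := rfl

/-- The scalar `u_F(X, Y)`. -/
def basicScalar (F : Cn K m ⥤ Cn K n) (X Y : Cn K m) : K := toK (F.map (CnHom X Y 1))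

lemma toK_map (F : Cn K m ⥤ Cn K n) (hF : IsKLinearFunctor K F) {X Y : Cn K m} (f : X ⟶ Y) :
    toK (F.map f) = toK f * basicScalar F X Y := by
  have hf : f = toK f • CnHom X Y 1 := (mul_one (toK f)).symm
  conv_lhs => rw [hf, hF.2]
  rfl

lemma basicScalar_trans (F : Cn K m ⥤ Cn K n) (X Y Z : Cn K m) :
    basicScalar F X Z = basicScalar F X Y * basicScalar F Y Z := by
  have h : CnHom X Z (1 : K) = CnHom X Y 1 ≫ CnHom Y Z 1 := (one_mul (1 : K)).symm
  rw [basicScalar, h, F.map_comp]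
  rfl

lemma basicScalar_self (F : Cn K m ⥤ Cn K n) (X : Cn K m) : basicScalar F X X = 1 :=
  congrArg toK (F.map_id X)

lemma basicScalar_ne_zero (F : Cn K m ⥤ Cn K n) (X Y : Cn K m) : basicScalar F X Y ≠ 0 :=
  left_ne_zero_of_mul_eq_one (b := basicScalar F Y X) <| by
    rw [← basicScalar_trans, basicScalar_self]

lemma basicScalar_naturality {F G : Cn K m ⥤ Cn K n} (φ : F ⟶ G) (X Y : Cn K m) :
    basicScalar F X Y * toK (φ.app Y) = toK (φ.app X) * basicScalar G X Y :=
  congrArg toK (φ.naturality (CnHom X Y 1))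

lemma basicScalar_mul_basicScalar_of_comp_comm {F G : Cn K n ⥤ Cn K n}
    (hF : IsKLinearFunctor K F) (hG : IsKLinearFunctor K G) (hFG : F ⋙ G = G ⋙ F)
    (X Y : Cn K n) :
    basicScalar F X Y * basicScalar G (F.obj X) (F.obj Y) =
      basicScalar G X Y * basicScalar F (G.obj X) (G.obj Y) := by
  have h := congrArg (fun H : Cn K n ⥤ Cn K n => toK (H.map (CnHom X Y 1))) hFG
  simpa only [Functor.comp_map, toK_map G hG, toK_map F hF, toK_CnHom, one_mul] using h

section Endo

variable {σ τ : Cn K n ⥤ Cn K n}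

def continuityFactor (σ τ : Cn K n ⥤ Cn K n) (i : Cn K n) : K :=
  basicScalar σ i (τ.obj i) / basicScalar τ i (σ.obj i)

lemma continuityFactor_ne_zero (i : Cn K n) : continuityFactor σ τ i ≠ 0 :=
  div_ne_zero (basicScalar_ne_zero _ _ _) (basicScalar_ne_zero _ _ _)

lemma toK_map_app (hσ : IsKLinearFunctor K σ) (φ : σ ⟶ τ) (i : Cn K n) :
    toK (σ.map (φ.app i)) = continuityFactor σ τ i * toK (φ.app (σ.obj i)) := by
  have hnat := basicScalar_naturality φ i (σ.obj i)
  rw [toK_map σ hσ, continuityFactor, basicScalar_trans σ i (σ.obj i) (τ.obj i),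
    div_mul_eq_mul_div, eq_div_iff (basicScalar_ne_zero τ i (σ.obj i))]
  linear_combination -basicScalar σ (σ.obj i) (τ.obj i) * hnat

lemma continuityFactor_eq (hσ : IsKLinearFunctor K σ) (hτ : IsKLinearFunctor K τ)
    (hcomm : σ ⋙ τ = τ ⋙ σ) (i j : Cn K n) :
    continuityFactor σ τ i = continuityFactor σ τ j := by
  have hc := basicScalar_mul_basicScalar_of_comp_comm hσ hτ hcomm j i
  -- expand `u_σ(j, τ i)` and `u_τ(j, σ i)` along both paths
  have hσ₁ := basicScalar_trans σ j i (τ.obj i)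
  have hσ₂ := basicScalar_trans σ j (τ.obj j) (τ.obj i)
  have hτ₁ := basicScalar_trans τ j i (σ.obj i)
  have hτ₂ := basicScalar_trans τ j (σ.obj j) (σ.obj i)
  rw [continuityFactor, continuityFactor,
    div_eq_div_iff (basicScalar_ne_zero _ _ _) (basicScalar_ne_zero _ _ _)]
  apply mul_left_cancel₀ (mul_ne_zero (basicScalar_ne_zero σ j i) (basicScalar_ne_zero τ j i))
  linear_combination basicScalar τ j i * basicScalar τ j (σ.obj j) * (hσ₂ - hσ₁)
    + basicScalar σ j i * basicScalar σ j (τ.obj j) * (hτ₁ - hτ₂)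
    - basicScalar σ j (τ.obj j) * basicScalar τ j (σ.obj j) * hc

def isoOfBasePoint (hσ : IsKLinearFunctor K σ) (hτ : IsKLinearFunctor K τ) (i₀ : Cn K n) :
    σ ≅ τ :=
  NatIso.ofComponents
    (fun X => isoOfNeZero (basicScalar τ i₀ X * basicScalar σ X i₀)
      (mul_ne_zero (basicScalar_ne_zero _ _ _) (basicScalar_ne_zero _ _ _)))
    (fun {X Y} f => by
      apply toK_injective
      rw [toK_comp, toK_comp, toK_map σ hσ, toK_map τ hτ, toK_isoOfNeZero_hom,
        toK_isoOfNeZero_hom]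
      rw [basicScalar_trans τ i₀ X Y, basicScalar_trans σ X Y i₀]
      ring)

lemma eq_of_forall_toK_map_app {s t : K}
    (hs : ∀ (φ : σ ≅ τ) (i : Cn K n), toK (σ.map (φ.hom.app i)) = s * toK (φ.hom.app (σ.obj i)))
    (φ : σ ≅ τ) (i : Cn K n)
    (ht : toK (σ.map (φ.hom.app i)) = t * toK (φ.hom.app (σ.obj i))) : s = t :=
  mul_right_cancel₀ (toK_app_ne_zero φ (σ.obj i)) ((hs φ i).symm.trans ht)

lemma isSkewContinuous_iff {s : K}
    (hs : ∀ (φ : σ ≅ τ) (i : Cn K n), toK (σ.map (φ.hom.app i)) = s * toK (φ.hom.app (σ.obj i)))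
    (φ : σ ≅ τ) (i₀ : Cn K n) :
    (∀ i, toK (σ.map (φ.hom.app i)) = -toK (φ.hom.app (σ.obj i))) ↔ s = -1 := by
  refine ⟨fun h => eq_of_forall_toK_map_app hs φ i₀ ?_, fun h i => ?_⟩
  · rw [h i₀, neg_one_mul]
  · rw [hs φ i, h, neg_one_mul]

end Endo

end Cn

open Cn

theorem stmt6_general (K : Type) [Field K] (n : ℕ) (hn : 0 < n)
    (σ τ : Cn K n ⥤ Cn K n)
    (hσl : IsKLinearFunctor K σ) (hτl : IsKLinearFunctor K τ)
    (hcomm : σ ⋙ τ = τ ⋙ σ) :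
    (∃! s : K, s ≠ 0 ∧ ∀ (φ : σ ≅ τ) (i : Cn K n),
        toK (σ.map (φ.hom.app i)) = s * toK (φ.hom.app (σ.obj i))) ∧
    (∀ s : K, s ≠ 0 →
      (∀ (φ : σ ≅ τ) (i : Cn K n),
        toK (σ.map (φ.hom.app i)) = s * toK (φ.hom.app (σ.obj i))) →
      ((∃ φ : σ ≅ τ, ∀ i : Cn K n,
          toK (σ.map (φ.hom.app i)) = - toK (φ.hom.app (σ.obj i))) ↔
        (∀ φ : σ ≅ τ, ∀ i : Cn K n,
          toK (σ.map (φ.hom.app i)) = - toK (φ.hom.app (σ.obj i)))) ∧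
      ((∃ φ : σ ≅ τ, ∀ i : Cn K n,
          toK (σ.map (φ.hom.app i)) = - toK (φ.hom.app (σ.obj i))) ↔ s = -1)) := by
  set i₀ : Cn K n := ⟨0, hn⟩
  have hfactor : ∀ (φ : σ ≅ τ) (i : Cn K n),
      toK (σ.map (φ.hom.app i)) = continuityFactor σ τ i₀ * toK (φ.hom.app (σ.obj i)) :=
    fun φ i => by rw [toK_map_app hσl, continuityFactor_eq hσl hτl hcomm i i₀]
  let φ₀ := isoOfBasePoint hσl hτl i₀
  refine ⟨⟨continuityFactor σ τ i₀, ⟨continuityFactor_ne_zero i₀, hfactor⟩,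
    fun s hs => (eq_of_forall_toK_map_app hfactor φ₀ i₀ (hs.2 φ₀ i₀)).symm⟩, fun s _ hs => ?_⟩
  have hskew := fun φ => isSkewContinuous_iff hs φ i₀
  exact ⟨⟨fun ⟨φ, hφ⟩ ψ => (hskew ψ).2 ((hskew φ).1 hφ), fun h => ⟨φ₀, h φ₀⟩⟩,
    ⟨fun ⟨φ, hφ⟩ => (hskew φ).1 hφ, fun h => ⟨φ₀, (hskew φ₀).2 h⟩⟩⟩

/-- **Proposition (the `σ`-continuity factor and skew-continuity).**  For a `K`-linear
automorphism `σ` and a commuting `K`-linear autoequivalence `τ` of `𝒞ₙ`, there is a unique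
nonzero scalar `s` with `σ(φ_i) = s • φ_{σ(i)}` for every natural isomorphism `φ : σ ≅ τ`
and every object `i`; moreover (1) some natural isomorphism `σ ≅ τ` is skew-continuous iff
(2) every natural isomorphism `σ ≅ τ` is skew-continuous iff (3) `s = -1`. -/
theorem stmt6 (K : Type) [Field K] (n : ℕ) (hn : 0 < n)
    (σ τ : Cn K n ⥤ Cn K n)
    (hσl : IsKLinearFunctor K σ) (hτl : IsKLinearFunctor K τ)
    (hσa : ∃ σ' : Cn K n ⥤ Cn K n, σ ⋙ σ' = 𝟭 (Cn K n) ∧ σ' ⋙ σ = 𝟭 (Cn K n))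
    (hτe : τ.IsEquivalence)
    (hcomm : σ ⋙ τ = τ ⋙ σ) :
    (∃! s : K, s ≠ 0 ∧ ∀ (φ : σ ≅ τ) (i : Cn K n),
        toK (σ.map (φ.hom.app i)) = s * toK (φ.hom.app (σ.obj i))) ∧
    (∀ s : K, s ≠ 0 →
      (∀ (φ : σ ≅ τ) (i : Cn K n),
        toK (σ.map (φ.hom.app i)) = s * toK (φ.hom.app (σ.obj i))) →
      ((∃ φ : σ ≅ τ, ∀ i : Cn K n,
          toK (σ.map (φ.hom.app i)) = - toK (φ.hom.app (σ.obj i))) ↔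
        (∀ φ : σ ≅ τ, ∀ i : Cn K n,
          toK (σ.map (φ.hom.app i)) = - toK (φ.hom.app (σ.obj i)))) ∧
      ((∃ φ : σ ≅ τ, ∀ i : Cn K n,
          toK (σ.map (φ.hom.app i)) = - toK (φ.hom.app (σ.obj i))) ↔ s = -1)) :=
  stmt6_general K n hn σ τ hσl hτl hcomm
end

section
/- Let σ, τ be commuting K-linear autoequivalences of 𝒞ₙ with σ an automorphism and τ an automorphism. Then {τ,σ} = {σ,τ}⁻¹. Equivalently: if φ : σ → τ is a natural isomorphism with inverse ψ : τ → σ, and s, s' ∈ K∖{0} satisfy σ(φ_i) = s·φ_{σ(i)} and τ(ψ_i) = s'·ψ_{τ(i)} for all objects i, then s' = s⁻¹. -/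
open CategoryTheory

/-!
Fix an object `i` and write `ψ = φ⁻¹`. Functoriality of `σ` gives `σ(φ_i) σ(ψ_i) = 1`, i.e.
`s φ_{σi} σ(ψ_i) = 1`, while naturality of `φ` at `ψ_i : τi ⟶ σi` gives
`σ(ψ_i) φ_{σi} = φ_{τi} τ(ψ_i) = s' φ_{τi} ψ_{τi} = s'`. Since all hom-spaces of `𝒞ₙ` are the
commutative ring `K`, the two equations combine to `s s' = 1`.
-/

namespace Cn

variable {K : Type} [Field K] {n : ℕ}

theorem toK_hom_mul_toK_inv {X Y : Cn K n} (e : X ≅ Y) : toK e.hom * toK e.inv = 1 :=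
  e.hom_inv_id

theorem mul_eq_one_of_map_app {σ τ : Cn K n ⥤ Cn K n} (φ : σ ≅ τ) (i : Cn K n) {s s' : K}
    (h1 : toK (σ.map (φ.hom.app i)) = s * toK (φ.hom.app (σ.obj i)))
    (h2 : toK (τ.map (φ.inv.app i)) = s' * toK (φ.inv.app (τ.obj i))) :
    s * s' = 1 := by
  have hσ : toK (σ.map (φ.hom.app i)) * toK (σ.map (φ.inv.app i)) = 1 :=
    toK_hom_mul_toK_inv (σ.mapIso (φ.app i))
  have hτ : toK (φ.hom.app (τ.obj i)) * toK (φ.inv.app (τ.obj i)) = 1 :=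
    toK_hom_mul_toK_inv (φ.app (τ.obj i))
  have hnat : toK (σ.map (φ.inv.app i)) * toK (φ.hom.app (σ.obj i)) =
      toK (φ.hom.app (τ.obj i)) * toK (τ.map (φ.inv.app i)) :=
    congrArg toK (φ.hom.naturality (φ.inv.app i))
  rw [h1] at hσ
  rw [h2] at hnat
  linear_combination hσ - s * hnat - s * s' * hτ

end Cn

theorem stmt8_general (K : Type) [Field K] (n : ℕ) (hn : 0 < n)
    (σ τ : Cn K n ⥤ Cn K n)
    (φ : σ ≅ τ) (s s' : K)
    (h1 : ∀ i : Cn K n, toK (σ.map (φ.hom.app i)) = s * toK (φ.hom.app (σ.obj i)))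
    (h2 : ∀ i : Cn K n, toK (τ.map (φ.inv.app i)) = s' * toK (φ.inv.app (τ.obj i))) :
    s' = s⁻¹ := by
  let i : Cn K n := (⟨0, hn⟩ : Fin n)
  exact eq_inv_of_mul_eq_one_right (Cn.mul_eq_one_of_map_app φ i (h1 i) (h2 i))

/-- **Corollary (antisymmetry of the continuity pairing): `{τ,σ} = {σ,τ}⁻¹`.**
If `φ : σ ≅ τ` is a natural isomorphism with inverse `ψ = φ.inv`, and `s, s'` are nonzero
scalars with `σ(φ_i) = s • φ_{σ(i)}` and `τ(ψ_i) = s' • ψ_{τ(i)}` for all `i`, then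
`s' = s⁻¹`. -/
theorem stmt8 (K : Type) [Field K] (n : ℕ) (hn : 0 < n)
    (σ τ : Cn K n ⥤ Cn K n)
    (hσl : IsKLinearFunctor K σ) (hτl : IsKLinearFunctor K τ)
    (hσa : ∃ σ' : Cn K n ⥤ Cn K n, σ ⋙ σ' = 𝟭 (Cn K n) ∧ σ' ⋙ σ = 𝟭 (Cn K n))
    (hτa : ∃ τ' : Cn K n ⥤ Cn K n, τ ⋙ τ' = 𝟭 (Cn K n) ∧ τ' ⋙ τ = 𝟭 (Cn K n))
    (hcomm : σ ⋙ τ = τ ⋙ σ)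
    (φ : σ ≅ τ) (s s' : K) (hs : s ≠ 0) (hs' : s' ≠ 0)
    (h1 : ∀ i : Cn K n, toK (σ.map (φ.hom.app i)) = s * toK (φ.hom.app (σ.obj i)))
    (h2 : ∀ i : Cn K n, toK (τ.map (φ.inv.app i)) = s' * toK (φ.inv.app (τ.obj i))) :
    s' = s⁻¹ :=
  stmt8_general K n hn σ τ φ s s' h1 h2
end

section
/- Let σ be a K-linear automorphism of 𝒞ₙ and let (x_{ij}) and (x'_{ij}) be two good bases for (𝒞ₙ,σ), with transition factors a_{AB} and b_{AB} respectively (indexed by pairs of orbits of the object permutation of σ). Then there exist unique scalars δ_A ∈ K∖{0}, one for each orbit A of σ, such that: (1) δ_A^{|A|} = 1 for every orbit A; (2) b_{AB} = δ_A·a_{AB}·δ_B⁻¹ for all orbits A, B; and (3) x'_{iσ(i)} = δ_A·x_{iσ(i)} whenever i ∈ A. Conversely, every collection of scalars (δ_A) satisfying (1) occurs in this way for some good basis (x'_{ij}). -/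
open CategoryTheory

/-- `i` and `j` lie in the same orbit of the permutation `π`. -/
def SameOrbit {N : ℕ} (π : Equiv.Perm (Fin N)) (i j : Fin N) : Prop :=
  ∃ k : ℕ, (π ^ k) i = j

/-- The number of elements of the orbit of `i` under the permutation `π`. -/
noncomputable def orbitSize {N : ℕ} (π : Equiv.Perm (Fin N)) (i : Fin N) : ℕ :=
  Set.ncard {j | SameOrbit π i j}

/-- `x` is a multiplicative basis for `𝒞_N` whose transition coefficients for the
`K`-linear automorphism `σ` (with underlying object permutation `σp`) are the scalars
`a i j` (i.e. `σ (x_{ij}) = a_{ij} • x_{σ(i) σ(j)}`), and these coefficients equal `1`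
whenever `i` and `j` lie in the same `σp`-orbit: a *good basis* for `(𝒞_N, σ)`. -/
def IsGoodBasis {K : Type} [Field K] {N : ℕ} (σ : Cn K N ⥤ Cn K N)
    (σp : Equiv.Perm (Fin N)) (x a : Cn K N → Cn K N → K) : Prop :=
  (∀ i j, x i j ≠ 0) ∧ (∀ i j k, x i j * x j k = x i k) ∧ (∀ i j, a i j ≠ 0) ∧
  (∀ i j : Cn K N, σ.map (CnHom j i (x i j)) =
    CnHom (σ.obj j) (σ.obj i) (a i j * x (σp i) (σp j))) ∧
  (∀ i j : Fin N, SameOrbit σp i j → a i j = 1)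

section Stmt11Aux

variable {K : Type} [Field K] {n : ℕ}

private lemma cn_smul_cnHom (X Y : Cn K n) (r s : K) :
    r • CnHom X Y s = CnHom X Y (r * s) := rfl

private lemma cn_toK_cnHom (X Y : Cn K n) (r : K) : toK (CnHom X Y r) = r := rfl

private lemma cn_mem_periodicPts (π : Equiv.Perm (Fin n)) (i : Fin n) :
    i ∈ Function.periodicPts ⇑π := by
  refine Function.mk_mem_periodicPts (orderOf_pos π) ?_
  show (⇑π)^[orderOf π] i = i
  rw [← Equiv.Perm.coe_pow, pow_orderOf_eq_one]
  rfl

private lemma cn_sameOrbit_refl (π : Equiv.Perm (Fin n)) (i : Fin n) :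
    SameOrbit π i i := ⟨0, rfl⟩

private lemma cn_sameOrbit_step (π : Equiv.Perm (Fin n)) (i : Fin n) :
    SameOrbit π i (π i) := ⟨1, by rw [pow_one]⟩

private lemma cn_sameOrbit_trans (π : Equiv.Perm (Fin n)) {i j k : Fin n}
    (h1 : SameOrbit π i j) (h2 : SameOrbit π j k) : SameOrbit π i k := by
  obtain ⟨s, hs⟩ := h1
  obtain ⟨t, ht⟩ := h2
  exact ⟨t + s, by rw [pow_add, Equiv.Perm.mul_apply, hs, ht]⟩

private lemma cn_sameOrbit_symm (π : Equiv.Perm (Fin n)) {i j : Fin n}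
    (h : SameOrbit π i j) : SameOrbit π j i := by
  obtain ⟨k, hk⟩ := h
  refine ⟨k * (orderOf π - 1), ?_⟩
  rw [← hk, ← Equiv.Perm.mul_apply, ← pow_add]
  have hN : 0 < orderOf π := orderOf_pos π
  have hexp : k * (orderOf π - 1) + k = orderOf π * k := by
    have : (orderOf π - 1).succ = orderOf π := Nat.succ_pred_eq_of_pos hN
    rw [← Nat.mul_succ, this, mul_comm]
  rw [hexp, pow_mul, pow_orderOf_eq_one, one_pow]
  rfl

private lemma cn_orbitSize_eq (π : Equiv.Perm (Fin n)) (i : Fin n) :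
    orbitSize π i = Function.minimalPeriod ⇑π i := by
  have hpos := Function.minimalPeriod_pos_of_mem_periodicPts (cn_mem_periodicPts π i)
  have hset : {j | SameOrbit π i j}
      = (fun k => (⇑π)^[k] i) '' Set.Iio (Function.minimalPeriod ⇑π i) := by
    ext j
    constructor
    · rintro ⟨k, hk⟩
      refine ⟨k % Function.minimalPeriod ⇑π i, Nat.mod_lt _ hpos, ?_⟩
      show (⇑π)^[k % Function.minimalPeriod ⇑π i] i = j
      rw [Function.iterate_mod_minimalPeriod_eq]
      exact hk
    · rintro ⟨k, _, hk⟩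
      exact ⟨k, hk⟩
  rw [orbitSize, hset,
    Set.ncard_image_of_injOn Function.iterate_injOn_Iio_minimalPeriod,
    ← Finset.coe_range, Set.ncard_coe_finset, Finset.card_range]

private lemma cn_minPer_sameOrbit (π : Equiv.Perm (Fin n)) {i j : Fin n}
    (h : SameOrbit π i j) :
    Function.minimalPeriod ⇑π j = Function.minimalPeriod ⇑π i := by
  obtain ⟨k, hk⟩ := h
  have hk' : (⇑π)^[k] i = j := hk
  rw [← hk']
  exact Function.minimalPeriod_apply_iterate (cn_mem_periodicPts π i) k

private lemma cn_mod_eq_of_iterate_eq (π : Equiv.Perm (Fin n)) (r : Fin n) {s t : ℕ}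
    (h : (⇑π)^[s] r = (⇑π)^[t] r) :
    s % Function.minimalPeriod ⇑π r = t % Function.minimalPeriod ⇑π r := by
  have hpos := Function.minimalPeriod_pos_of_mem_periodicPts (cn_mem_periodicPts π r)
  apply Function.iterate_injOn_Iio_minimalPeriod (Nat.mod_lt _ hpos) (Nat.mod_lt _ hpos)
  show (⇑π)^[s % _] r = (⇑π)^[t % _] r
  rw [Function.iterate_mod_minimalPeriod_eq, Function.iterate_mod_minimalPeriod_eq]
  exact h

private lemma cn_pow_eq_pow_of_mod {d : K} {m s t : ℕ} (hd : d ^ m = 1)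
    (h : s % m = t % m) : d ^ s = d ^ t := by
  have key : ∀ u : ℕ, d ^ u = d ^ (u % m) := by
    intro u
    conv_lhs => rw [← Nat.div_add_mod u m]
    rw [pow_add, pow_mul, hd, one_pow, one_mul]
  rw [key s, key t, h]

end Stmt11Aux
/-- **Proposition (change of good basis).**  Given two good bases `(x, a)` and `(x', b)` for
`(𝒞ₙ, σ)`, there are unique scalars `δ` (constant on `σ`-orbits) such that
(1) `δ_A ^ |A| = 1` for every orbit `A`, (2) `b_{AB} = δ_A * a_{AB} * δ_B⁻¹`, and
(3) `x'_{i σ(i)} = δ_A * x_{i σ(i)}` for `i ∈ A`.  Conversely, any such collection of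
roots of unity occurs for some good basis `(x', b)`. -/
theorem stmt11 (K : Type) [Field K] (n : ℕ)
    (σ : Cn K n ⥤ Cn K n) (hσl : IsKLinearFunctor K σ)
    (hσa : ∃ σ' : Cn K n ⥤ Cn K n, σ ⋙ σ' = 𝟭 (Cn K n) ∧ σ' ⋙ σ = 𝟭 (Cn K n))
    (σp : Equiv.Perm (Fin n)) (hobj : ∀ i : Cn K n, σ.obj i = σp i)
    (x a : Cn K n → Cn K n → K) (hx : IsGoodBasis σ σp x a) :
    (∀ x' b : Cn K n → Cn K n → K, IsGoodBasis σ σp x' b →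
      ∃! δ : Fin n → K,
        (∀ i j : Fin n, SameOrbit σp i j → δ i = δ j) ∧
        (∀ i, δ i ≠ 0) ∧
        (∀ i : Fin n, δ i ^ orbitSize σp i = 1) ∧
        (∀ i j : Fin n, b i j = δ i * a i j * (δ j)⁻¹) ∧
        (∀ i : Fin n, x' i (σp i) = δ i * x i (σp i))) ∧
    (∀ δ : Fin n → K,
      (∀ i j : Fin n, SameOrbit σp i j → δ i = δ j) →
      (∀ i : Fin n, δ i ^ orbitSize σp i = 1) →
      ∃ x' b : Cn K n → Cn K n → K, IsGoodBasis σ σp x' b ∧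
        (∀ i j : Fin n, b i j = δ i * a i j * (δ j)⁻¹) ∧
        (∀ i : Fin n, x' i (σp i) = δ i * x i (σp i))) := by
  obtain ⟨hx0, hxm, ha0, hxf, hag⟩ := hx
  constructor
  · -- forward direction
    intro x' b hx'
    obtain ⟨hx0', hxm', hb0, hxf', hbg⟩ := hx'
    set c : Fin n → Fin n → K := fun i j => x' i j * (x i j)⁻¹ with hcdef
    have hc0 : ∀ i j, c i j ≠ 0 := fun i j =>
      mul_ne_zero (hx0' i j) (inv_ne_zero (hx0 i j))
    have hx'e : ∀ p q, x' p q = c p q * x p q := by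
      intro p q
      exact (inv_mul_cancel_right₀ (hx0 p q) (x' p q)).symm
    have hcmul : ∀ i j k, c i j * c j k = c i k := by
      intro i j k
      have h1 := hxm i j k
      have h2 := hxm' i j k
      show x' i j * (x i j)⁻¹ * (x' j k * (x j k)⁻¹) = x' i k * (x i k)⁻¹
      rw [← h1, ← h2, mul_inv]
      ring
    have hcii : ∀ i, c i i = 1 := by
      intro i
      have h := hcmul i i i
      exact mul_left_cancel₀ (hc0 i i) (h.trans (mul_one _).symm)
    have hkey : ∀ i j : Fin n,
        c i j * (a i j * x (σp i) (σp j)) = b i j * x' (σp i) (σp j) := by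
      intro i j
      have hsm : CnHom j i (x' i j) = c i j • CnHom j i (x i j) := by
        exact congrArg (CnHom (K := K) j i) (hx'e i j)
      have h2 := hxf' i j
      have h3 := hσl.2 j i (c i j) (CnHom j i (x i j))
      exact (congrArg (fun f => toK (c i j • f)) (hxf i j)).symm.trans
        ((congrArg toK h3).symm.trans ((congrArg (fun f => toK (σ.map f)) hsm).symm.trans (congrArg toK h2)))
    set δ : Fin n → K := fun i => c i (σp i) with hδdef
    have hδ0 : ∀ i, δ i ≠ 0 := fun i => hc0 i (σp i)
    have hkey' : ∀ i j : Fin n, b i j * c (σp i) (σp j) = c i j * a i j := by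
      intro i j
      apply mul_right_cancel₀ (hx0 (σp i) (σp j))
      calc b i j * c (σp i) (σp j) * x (σp i) (σp j)
          = b i j * x' (σp i) (σp j) := by rw [hx'e (σp i) (σp j)]; ring
        _ = c i j * a i j * x (σp i) (σp j) := by rw [← hkey i j]; ring
    have hδstep : ∀ i, δ (σp i) = δ i := by
      intro i
      have h := hkey' i (σp i)
      rw [hbg i (σp i) (cn_sameOrbit_step σp i),
        hag i (σp i) (cn_sameOrbit_step σp i), one_mul, mul_one] at h
      exact h
    have hδiter : ∀ (k : ℕ) (i : Fin n), δ ((⇑σp)^[k] i) = δ i := by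
      intro k
      induction k with
      | zero => intro i; rfl
      | succ t ih =>
        intro i
        rw [Function.iterate_succ_apply', hδstep ((⇑σp)^[t] i), ih i]
    have hδorb : ∀ i j : Fin n, SameOrbit σp i j → δ i = δ j := by
      intro i j hij
      obtain ⟨k, hk⟩ := hij
      have hk' : (⇑σp)^[k] i = j := hk
      rw [← hk', hδiter k i]
    have hcpow : ∀ (t : ℕ) (i : Fin n), c i ((⇑σp)^[t] i) = δ i ^ t := by
      intro t
      induction t with
      | zero => intro i; exact (hcii i).trans (pow_zero _).symm
      | succ t ih =>
        intro i
        rw [Function.iterate_succ_apply']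
        have h := hcmul i ((⇑σp)^[t] i) (σp ((⇑σp)^[t] i))
        rw [← h, ih i]
        have : c ((⇑σp)^[t] i) (σp ((⇑σp)^[t] i)) = δ ((⇑σp)^[t] i) := rfl
        rw [this, hδiter t i, pow_succ]
    have hδpow : ∀ i : Fin n, δ i ^ orbitSize σp i = 1 := by
      intro i
      rw [cn_orbitSize_eq]
      have h := hcpow (Function.minimalPeriod ⇑σp i) i
      have hfix : (⇑σp)^[Function.minimalPeriod ⇑σp i] i = i :=
        Function.isPeriodicPt_minimalPeriod ⇑σp i
      rw [hfix, hcii] at h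
      exact h.symm
    have hbform : ∀ i j : Fin n, b i j = δ i * a i j * (δ j)⁻¹ := by
      intro i j
      have hk := hkey' i j
      have hco : δ i * c (σp i) (σp j) = c i j * δ j := by
        show c i (σp i) * c (σp i) (σp j) = c i j * c j (σp j)
        rw [hcmul, hcmul]
      have h5 : b i j * δ j = δ i * a i j := by
        apply mul_right_cancel₀ (hc0 (σp i) (σp j))
        linear_combination δ j * hk - a i j * hco
      field_simp [hδ0 j]
      linear_combination h5
    have hxform : ∀ i : Fin n, x' i (σp i) = δ i * x i (σp i) := by
      intro i
      exact hx'e i (σp i)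
    refine ⟨δ, ⟨hδorb, hδ0, hδpow, hbform, hxform⟩, ?_⟩
    intro y hy
    funext i
    exact mul_right_cancel₀ (hx0 i (σp i)) ((hy.2.2.2.2 i).symm.trans (hxform i))
  · -- converse direction
    intro δ hconst hpow
    classical
    have hδ0 : ∀ i, δ i ≠ 0 := by
      intro i h0
      have h := hpow i
      rw [h0, zero_pow] at h
      · exact zero_ne_one h
      · rw [cn_orbitSize_eq]
        exact (Function.minimalPeriod_pos_of_mem_periodicPts
          (cn_mem_periodicPts σp i)).ne'
    set orb : Fin n → Finset (Fin n) :=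
      fun i => Finset.univ.filter (fun j => SameOrbit σp i j) with horbdef
    have hmem : ∀ i, i ∈ orb i := fun i =>
      Finset.mem_filter.2 ⟨Finset.mem_univ _, cn_sameOrbit_refl σp i⟩
    have horbeq : ∀ i j, SameOrbit σp i j → orb i = orb j := by
      intro i j h
      ext t
      simp only [horbdef, Finset.mem_filter, Finset.mem_univ, true_and]
      exact ⟨fun ht => cn_sameOrbit_trans σp (cn_sameOrbit_symm σp h) ht,
        fun ht => cn_sameOrbit_trans σp h ht⟩
    set rep : Fin n → Fin n := fun i => (orb i).min' ⟨i, hmem i⟩ with hrepdef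
    have hrep_const : ∀ i j, SameOrbit σp i j → rep i = rep j := by
      intro i j h
      simp only [hrepdef]
      congr 1
      exact horbeq i j h
    have hrep_orb : ∀ i, SameOrbit σp (rep i) i := by
      intro i
      have h : rep i ∈ orb i := (orb i).min'_mem _
      exact cn_sameOrbit_symm σp (Finset.mem_filter.1 h).2
    have hex : ∀ i, ∃ k, (⇑σp)^[k] (rep i) = i := fun i => hrep_orb i
    set kk : Fin n → ℕ := fun i => Nat.find (hex i) with hkkdef
    have hkk : ∀ i, (⇑σp)^[kk i] (rep i) = i := fun i => Nat.find_spec (hex i)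
    have hδrep : ∀ i, δ (rep i) = δ i := fun i => hconst (rep i) i (hrep_orb i)
    have hμkey : ∀ i, δ i ^ kk (σp i) = δ i ^ (kk i + 1) := by
      intro i
      have hre : rep i = rep (σp i) := hrep_const i (σp i) (cn_sameOrbit_step σp i)
      have h1 : (⇑σp)^[kk (σp i)] (rep i) = σp i := by rw [hre]; exact hkk (σp i)
      have h2 : (⇑σp)^[kk i + 1] (rep i) = σp i := by
        rw [Function.iterate_succ_apply', hkk i]
      have hmod := cn_mod_eq_of_iterate_eq σp (rep i) (h1.trans h2.symm)
      have hone : δ i ^ Function.minimalPeriod ⇑σp (rep i) = 1 := by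
        have h := hpow (rep i)
        rw [cn_orbitSize_eq, hδrep i] at h
        exact h
      exact cn_pow_eq_pow_of_mod hone hmod
    set μ : Fin n → K := fun i => (δ i)⁻¹ ^ kk i with hμdef
    have hμ0 : ∀ i, μ i ≠ 0 := fun i => pow_ne_zero _ (inv_ne_zero (hδ0 i))
    have hμstep : ∀ i, μ i = δ i * μ (σp i) := by
      intro i
      have hδσ : δ (σp i) = δ i := (hconst i (σp i) (cn_sameOrbit_step σp i)).symm
      simp only [hμdef, hδσ]
      rw [inv_pow, inv_pow, hμkey i, pow_succ]
      have h1 : δ i ^ kk i ≠ 0 := pow_ne_zero _ (hδ0 i)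
      field_simp
      rw [div_self (hδ0 i)]
    refine ⟨fun i j => μ i * (μ j)⁻¹ * x i j, fun i j => δ i * a i j * (δ j)⁻¹,
      ⟨?_, ?_, ?_, ?_, ?_⟩, fun i j => rfl, ?_⟩
    · intro i j
      exact mul_ne_zero (mul_ne_zero (hμ0 i) (inv_ne_zero (hμ0 j))) (hx0 i j)
    · intro i j k
      show μ i * (μ j)⁻¹ * x i j * (μ j * (μ k)⁻¹ * x j k) = μ i * (μ k)⁻¹ * x i k
      rw [← hxm i j k]
      have hjj : (μ j)⁻¹ * μ j = 1 := inv_mul_cancel₀ (hμ0 j)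
      linear_combination (μ i * (μ k)⁻¹ * x i j * x j k) * hjj
    · intro i j
      exact mul_ne_zero (mul_ne_zero (hδ0 i) (ha0 i j)) (inv_ne_zero (hδ0 j))
    · intro i j
      have hsm : CnHom j i (μ i * (μ j)⁻¹ * x i j)
          = (μ i * (μ j)⁻¹) • CnHom j i (x i j) := by rw [cn_smul_cnHom]
      rw [hsm, hσl.2 _ _ _ _, hxf i j, cn_smul_cnHom]
      show CnHom (σ.obj j) (σ.obj i) _ = CnHom (σ.obj j) (σ.obj i) _
      congr 1
      rw [hμstep i, hμstep j]
      have h1 : (μ (σp j))⁻¹ * μ (σp j) = 1 := inv_mul_cancel₀ (hμ0 (σp j))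
      have h2 : (δ j)⁻¹ * δ j = 1 := inv_mul_cancel₀ (hδ0 j)
      field_simp
    · intro i j h
      have hδij : δ i = δ j := hconst i j h
      show δ i * a i j * (δ j)⁻¹ = 1
      rw [hag i j h, hδij, mul_one, mul_inv_cancel₀ (hδ0 j)]
    · intro i
      show μ i * (μ (σp i))⁻¹ * x i (σp i) = δ i * x i (σp i)
      rw [hμstep i]
      have hjj : μ (σp i) * (μ (σp i))⁻¹ = 1 := mul_inv_cancel₀ (hμ0 (σp i))
      linear_combination (δ i * x i (σp i)) * hjj
end

section
/- Let σ be a K-linear automorphism of 𝒞ₙ and let A, B be orbits of the object permutation of σ with |A| = |B| = m. Then a_{AB}^m, the m-th power of the AB transition factor of σ with respect to a good basis for (𝒞ₙ,σ), is independent of the choice of good basis. -/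
open CategoryTheory

private lemma toK_CnHom {K : Type} [Field K] {n : ℕ} (X Y : Cn K n) (r : K) :
    toK (CnHom X Y r) = r := rfl

private lemma pow_orbitSize_apply {N : ℕ} (π : Equiv.Perm (Fin N)) (i : Fin N) :
    (π ^ (orbitSize π i)) i = i := by
  have hper : i ∈ Function.periodicPts π := by
    refine ⟨orderOf π, orderOf_pos π, ?_⟩
    show π^[orderOf π] i = i
    rw [Equiv.Perm.iterate_eq_pow, pow_orderOf_eq_one]
    rfl
  have hd : 0 < Function.minimalPeriod π i :=
    Function.minimalPeriod_pos_of_mem_periodicPts hper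
  have hset : {j | SameOrbit π i j} =
      (fun k : ℕ => (π ^ k) i) '' (Set.Iio (Function.minimalPeriod π i)) := by
    ext y
    constructor
    · rintro ⟨k, rfl⟩
      refine ⟨k % Function.minimalPeriod π i, Nat.mod_lt _ hd, ?_⟩
      show (π ^ (k % Function.minimalPeriod (⇑π) i)) i = (π ^ k) i
      rw [← Equiv.Perm.iterate_eq_pow, ← Equiv.Perm.iterate_eq_pow,
        Function.iterate_mod_minimalPeriod_eq]
    · rintro ⟨k, _, rfl⟩
      exact ⟨k, rfl⟩
  have hinj : Set.InjOn (fun k : ℕ => (π ^ k) i) (Set.Iio (Function.minimalPeriod π i)) := by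
    have := Function.iterate_injOn_Iio_minimalPeriod (f := ⇑π) (x := i)
    simpa [← Equiv.Perm.iterate_eq_pow] using this
  have hsize : orbitSize π i = Function.minimalPeriod π i := by
    rw [orbitSize, hset, Set.ncard_image_of_injOn hinj, ← Nat.card_coe_set_eq]
    simp [Nat.card_Iio]
  rw [hsize, ← Equiv.Perm.iterate_eq_pow]
  exact Function.isPeriodicPt_minimalPeriod π i

/-- **Corollary (well-definedness of `a_{AB}^m`).**  If `A, B` are orbits of the object
permutation of `σ` of the same size `m`, then the `m`-th power of the `AB` transition
factor of `σ` is independent of the choice of good basis. -/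
theorem stmt12 (K : Type) [Field K] (n : ℕ)
    (σ : Cn K n ⥤ Cn K n) (hσl : IsKLinearFunctor K σ)
    (hσa : ∃ σ' : Cn K n ⥤ Cn K n, σ ⋙ σ' = 𝟭 (Cn K n) ∧ σ' ⋙ σ = 𝟭 (Cn K n))
    (σp : Equiv.Perm (Fin n)) (hobj : ∀ i : Cn K n, σ.obj i = σp i)
    (x a x' b : Cn K n → Cn K n → K)
    (hx : IsGoodBasis σ σp x a) (hx' : IsGoodBasis σ σp x' b)
    (i j : Fin n) (m : ℕ)
    (hA : orbitSize σp i = m) (hB : orbitSize σp j = m) :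
    a i j ^ m = b i j ^ m := by
  obtain ⟨hx0, hxm, ha0, hxt, ha1⟩ := hx
  obtain ⟨hx'0, hx'm, hb0, hx't, hb1⟩ := hx'
  -- multiplicativity of transition coefficients
  have tmul : ∀ (y t : Cn K n → Cn K n → K),
      (∀ p q, y p q ≠ 0) → (∀ p q r, y p q * y q r = y p r) →
      (∀ p q : Cn K n, σ.map (CnHom q p (y p q)) =
        CnHom (σ.obj q) (σ.obj p) (t p q * y (σp p) (σp q))) →
      ∀ p q r : Cn K n, t p r = t p q * t q r := by
    intro y t hy0 hym hyt p q r
    have hc : CnHom r p (y p r) = CnHom r q (y q r) ≫ CnHom q p (y p q) := by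
      show y p r = y q r * y p q
      rw [mul_comm]; exact (hym p q r).symm
    have h1 : toK (σ.map (CnHom r p (y p r))) = t p r * y (σp p) (σp r) :=
      congrArg toK (hyt p r)
    have h2 : toK (σ.map (CnHom r p (y p r)))
        = toK (σ.map (CnHom r q (y q r))) * toK (σ.map (CnHom q p (y p q))) := by
      rw [hc, σ.map_comp]; rfl
    rw [congrArg toK (hyt q r), congrArg toK (hyt p q), toK_CnHom, toK_CnHom] at h2
    have h3 : t p r * y (σp p) (σp r) = (t p q * t q r) * y (σp p) (σp r) := by
      rw [← h1, h2, ← hym (σp p) (σp q) (σp r)]; ring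
    exact mul_right_cancel₀ (hy0 _ _) h3
  have amul := tmul x a hx0 hxm hxt
  have bmul := tmul x' b hx'0 hx'm hx't
  -- orbit invariance of transition coefficients
  have tinv : ∀ (t : Cn K n → Cn K n → K),
      (∀ p q r : Cn K n, t p r = t p q * t q r) →
      (∀ p q : Fin n, SameOrbit σp p q → t p q = 1) →
      ∀ p q : Cn K n, t (σp p) (σp q) = t p q := by
    intro t tm t1 p q
    have hself : ∀ p : Cn K n, t p p = 1 := fun p => t1 p p ⟨0, by simp; rfl⟩
    have hstep : ∀ p : Cn K n, t p (σp p) = 1 := fun p => t1 p (σp p) ⟨1, by simp⟩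
    have hback : ∀ p : Cn K n, t (σp p) p = 1 := by
      intro p
      have h := tm (σp p) p (σp p)
      rw [hself (σp p), hstep p, mul_one] at h
      exact h.symm
    rw [tm (σp p) p (σp q), tm p q (σp q), hback, hstep, one_mul, mul_one]
  have ainv := tinv a amul ha1
  have binv := tinv b bmul hb1
  -- the comparison function c
  set c : Cn K n → Cn K n → K := fun p q => x' p q / x p q with hc
  have hc0 : ∀ p q, c p q ≠ 0 := fun p q => div_ne_zero (hx'0 p q) (hx0 p q)
  have hcx : ∀ p q, x' p q = c p q * x p q := fun p q =>
    (div_mul_cancel₀ (x' p q) (hx0 p q)).symm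
  -- the key relation
  have key : ∀ p q : Cn K n, b p q * c (σp p) (σp q) = a p q * c p q := by
    intro p q
    have hsm : CnHom q p (x' p q) = (c p q • CnHom q p (x p q) : q ⟶ p) := by
      show x' p q = c p q * x p q
      exact hcx p q
    have h1 : toK (σ.map (CnHom q p (x' p q))) = b p q * x' (σp p) (σp q) :=
      congrArg toK (hx't p q)
    have h2 : toK (σ.map (CnHom q p (x' p q))) = c p q * toK (σ.map (CnHom q p (x p q))) := by
      rw [hsm, hσl.2]; rfl
    rw [congrArg toK (hxt p q), toK_CnHom] at h2
    have h3 : (b p q * c (σp p) (σp q)) * x (σp p) (σp q)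
        = (a p q * c p q) * x (σp p) (σp q) := by
      have := h1.symm.trans h2
      rw [hcx (σp p) (σp q)] at this
      calc (b p q * c (σp p) (σp q)) * x (σp p) (σp q)
          = b p q * (c (σp p) (σp q) * x (σp p) (σp q)) := by ring
        _ = c p q * (a p q * x (σp p) (σp q)) := this
        _ = (a p q * c p q) * x (σp p) (σp q) := by ring
    exact mul_right_cancel₀ (hx0 _ _) h3
  -- invariance iterated
  have ainvk : ∀ k : ℕ, a ((σp ^ k) i) ((σp ^ k) j) = a i j := by
    intro k
    induction k with
    | zero => simp
    | succ k ih =>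
      rw [pow_succ' σp k, Equiv.Perm.mul_apply, Equiv.Perm.mul_apply, ainv ((σp ^ k) i) ((σp ^ k) j), ih]
  have binvk : ∀ k : ℕ, b ((σp ^ k) i) ((σp ^ k) j) = b i j := by
    intro k
    induction k with
    | zero => simp
    | succ k ih =>
      rw [pow_succ' σp k, Equiv.Perm.mul_apply, Equiv.Perm.mul_apply, binv ((σp ^ k) i) ((σp ^ k) j), ih]
  -- telescoping induction
  have hiter : ∀ k : ℕ, b i j ^ k * c ((σp ^ k) i) ((σp ^ k) j) = a i j ^ k * c i j := by
    intro k
    induction k with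
    | zero => simp
    | succ k ih =>
      have hpi : (σp ^ (k + 1)) i = σp ((σp ^ k) i) := by
        rw [pow_succ' σp k, Equiv.Perm.mul_apply]
      have hpj : (σp ^ (k + 1)) j = σp ((σp ^ k) j) := by
        rw [pow_succ' σp k, Equiv.Perm.mul_apply]
      rw [hpi, hpj]
      calc b i j ^ (k + 1) * c (σp ((σp ^ k) i)) (σp ((σp ^ k) j))
          = b i j ^ k * (b ((σp ^ k) i) ((σp ^ k) j)
              * c (σp ((σp ^ k) i)) (σp ((σp ^ k) j))) := by rw [binvk]; ring
        _ = b i j ^ k * (a ((σp ^ k) i) ((σp ^ k) j)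
              * c ((σp ^ k) i) ((σp ^ k) j)) := by
              rw [key ((σp ^ k) i) ((σp ^ k) j)]
        _ = a i j * (b i j ^ k * c ((σp ^ k) i) ((σp ^ k) j)) := by rw [ainvk]; ring
        _ = a i j * (a i j ^ k * c i j) := by rw [ih]
        _ = a i j ^ (k + 1) * c i j := by ring
  have hmi : (σp ^ m) i = i := by rw [← hA]; exact pow_orbitSize_apply σp i
  have hmj : (σp ^ m) j = j := by rw [← hB]; exact pow_orbitSize_apply σp j
  have h := hiter m
  rw [hmi, hmj] at h
  exact (mul_right_cancel₀ (hc0 i j) h).symm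
end

section
/- Let σ₁, σ₂ be K-linear automorphisms of 𝒞ₙ and 𝒞ₘ respectively, and let τ : 𝒞ₙ → 𝒞ₘ be a K-linear functor with τσ₁ = σ₂τ. Given any good basis (y_{kl}) for (𝒞ₘ,σ₂), there is a unique good basis (x_{ij}) for (𝒞ₙ,σ₁) such that τ(x_{ij}) = y_{τ(i)τ(j)} for all i,j ∈ [n] (equivalently, all transition coefficients of τ with respect to these bases equal 1). -/
/-!
Every hom-space of `𝒞ₙ` is `K`, so a `K`-linear functor `τ` acts on `𝒞ₙ(j,i)` as multiplication
by the scalar `τ(1)`, which is invertible because `τ` preserves composition and identities.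
Hence `τ` is bijective on hom-spaces: there is exactly one family `x` with
`τ(x_{ij}) = y_{τ(i)τ(j)}`, and it inherits multiplicativity from `y`. Applying `τ` to
`σ₁(x_{ij})` and using `τσ₁ = σ₂τ` shows that the transition coefficients of `σ₁` for `x` are
`c_{τ(i)τ(j)}`; since `τ` maps `σ₁`-orbits into `σ₂`-orbits, they equal `1` on orbits.
-/

open CategoryTheory

lemma SameOrbit.map {N M : ℕ} {π : Equiv.Perm (Fin N)} {ρ : Equiv.Perm (Fin M)}
    {f : Fin N → Fin M} (hf : ∀ i, f (π i) = ρ (f i)) {i j : Fin N}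
    (h : SameOrbit π i j) : SameOrbit ρ (f i) (f j) := by
  obtain ⟨k, rfl⟩ := h
  exact ⟨k, (Function.Semiconj.iterate_right hf k i).symm⟩

section LinearFunctor

variable {K : Type} [Field K] {n m : ℕ}

lemma toK_map_eq_of_eq {F G : Cn K n ⥤ Cn K m} (h : F = G) {X Y : Cn K n} (f : X ⟶ Y) :
    toK (F.map f) = toK (G.map f) := by
  subst h; rfl

lemma toK_map_cnHom_one_ne_zero (F : Cn K n ⥤ Cn K m) (X Y : Cn K n) :
    toK (F.map (CnHom X Y 1)) ≠ 0 := by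
  have hid : CnHom X Y (1 : K) ≫ CnHom Y X 1 = 𝟙 X := mul_one 1
  have h := congrArg toK (congrArg F.map hid)
  rw [F.map_comp, F.map_id] at h
  exact left_ne_zero_of_mul_eq_one h

namespace IsKLinearFunctor

variable {F : Cn K n ⥤ Cn K m}

lemma toK_map_cnHom (hF : IsKLinearFunctor K F) (X Y : Cn K n) (r : K) :
    toK (F.map (CnHom X Y r)) = r * toK (F.map (CnHom X Y 1)) := by
  have h : CnHom X Y r = r • CnHom X Y 1 := (mul_one r).symm
  rw [h, hF.2]
  rfl

lemma map_cnHom_bijective (hF : IsKLinearFunctor K F) (X Y : Cn K n) :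
    Function.Bijective fun r : K => F.map (CnHom X Y r) := by
  have ht := toK_map_cnHom_one_ne_zero F X Y
  refine ⟨fun r s h => mul_right_cancel₀ ht ?_, fun g => ⟨toK g / toK (F.map (CnHom X Y 1)), ?_⟩⟩
  · rw [← hF.toK_map_cnHom, ← hF.toK_map_cnHom]
    exact congrArg toK h
  · show toK (F.map (CnHom X Y _)) = toK g
    rw [hF.toK_map_cnHom, div_mul_cancel₀ _ ht]

end IsKLinearFunctor

def MapsBasis (F : Cn K n ⥤ Cn K m) (x : Cn K n → Cn K n → K) (y : Cn K m → Cn K m → K) :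
    Prop :=
  ∀ i j, F.map (CnHom j i (x i j)) = CnHom (F.obj j) (F.obj i) (y (F.obj i) (F.obj j))

lemma IsKLinearFunctor.existsUnique_mapsBasis {F : Cn K n ⥤ Cn K m}
    (hF : IsKLinearFunctor K F) (y : Cn K m → Cn K m → K) : ∃! x, MapsBasis F x y := by
  choose x hx using fun i j : Cn K n =>
    (hF.map_cnHom_bijective j i).2 (CnHom (F.obj j) (F.obj i) (y (F.obj i) (F.obj j)))
  exact ⟨x, hx, fun x' hx' => funext₂ fun i j =>
    (hF.map_cnHom_bijective j i).1 ((hx' i j).trans (hx i j).symm)⟩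

namespace MapsBasis

variable {F : Cn K n ⥤ Cn K m} {x : Cn K n → Cn K n → K} {y : Cn K m → Cn K m → K}

lemma toK_map (hx : MapsBasis F x y) (i j : Cn K n) :
    toK (F.map (CnHom j i (x i j))) = y (F.obj i) (F.obj j) :=
  congrArg toK (hx i j)

lemma ne_zero (hx : MapsBasis F x y) (hF : IsKLinearFunctor K F) (hy : ∀ k l, y k l ≠ 0)
    (i j : Cn K n) : x i j ≠ 0 := by
  intro h0
  apply hy (F.obj i) (F.obj j)
  rw [← hx.toK_map, hF.toK_map_cnHom, h0, zero_mul]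

lemma mul_eq (hx : MapsBasis F x y) (hF : IsKLinearFunctor K F)
    (hy : ∀ k l p, y k l * y l p = y k p) (i j k : Cn K n) : x i j * x j k = x i k := by
  apply (hF.map_cnHom_bijective k i).1
  have hcomp : CnHom k i (x i j * x j k) = CnHom k j (x j k) ≫ CnHom j i (x i j) := mul_comm _ _
  beta_reduce
  rw [hcomp, F.map_comp, hx, hx, hx]
  exact (mul_comm _ _).trans (hy _ _ _)

end MapsBasis

variable {σ₁ : Cn K n ⥤ Cn K n} {σ₂ : Cn K m ⥤ Cn K m}
  {σ₁p : Equiv.Perm (Fin n)} {σ₂p : Equiv.Perm (Fin m)} {τ : Cn K n ⥤ Cn K m}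

lemma obj_perm_comm (hobj₁ : ∀ i : Cn K n, σ₁.obj i = σ₁p i)
    (hobj₂ : ∀ i : Cn K m, σ₂.obj i = σ₂p i) (hcomm : σ₁ ⋙ τ = τ ⋙ σ₂) (i : Fin n) :
    τ.obj (σ₁p i) = σ₂p (τ.obj i) :=
  ((congrArg τ.obj (hobj₁ i)).symm.trans (Functor.congr_obj hcomm i)).trans (hobj₂ _)

lemma MapsBasis.map_cnHom_eq {x : Cn K n → Cn K n → K} {y c : Cn K m → Cn K m → K}
    (hx : MapsBasis τ x y) (hτ : IsKLinearFunctor K τ) (hobj₁ : ∀ i : Cn K n, σ₁.obj i = σ₁p i)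
    (hobj₂ : ∀ i : Cn K m, σ₂.obj i = σ₂p i) (hcomm : σ₁ ⋙ τ = τ ⋙ σ₂)
    (hyσ : ∀ k l : Cn K m, σ₂.map (CnHom l k (y k l)) =
      CnHom (σ₂.obj l) (σ₂.obj k) (c k l * y (σ₂p k) (σ₂p l)))
    (i j : Cn K n) :
    σ₁.map (CnHom j i (x i j)) =
      CnHom (σ₁.obj j) (σ₁.obj i) (c (τ.obj i) (τ.obj j) * x (σ₁p i) (σ₁p j)) := by
  apply (hτ.map_cnHom_bijective (σ₁.obj j) (σ₁.obj i)).1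
  calc toK (τ.map (σ₁.map (CnHom j i (x i j))))
      = toK (σ₂.map (τ.map (CnHom j i (x i j)))) := toK_map_eq_of_eq hcomm _
    _ = c (τ.obj i) (τ.obj j) * y (σ₂p (τ.obj i)) (σ₂p (τ.obj j)) := by rw [hx i j, hyσ]; rfl
    _ = c (τ.obj i) (τ.obj j) * toK (τ.map (CnHom (σ₁.obj j) (σ₁.obj i) (x (σ₁p i) (σ₁p j)))) := by
      erw [hobj₁, hobj₁, hx.toK_map, obj_perm_comm hobj₁ hobj₂ hcomm,
        obj_perm_comm hobj₁ hobj₂ hcomm]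
    _ = toK (τ.map (CnHom (σ₁.obj j) (σ₁.obj i) (c (τ.obj i) (τ.obj j) * x (σ₁p i) (σ₁p j)))) := by
      rw [hτ.toK_map_cnHom, ← mul_assoc]
      exact (hτ.toK_map_cnHom _ _ _).symm

lemma IsGoodBasis.pullback {x : Cn K n → Cn K n → K} {y c : Cn K m → Cn K m → K}
    (hy : IsGoodBasis σ₂ σ₂p y c) (hτ : IsKLinearFunctor K τ)
    (hobj₁ : ∀ i : Cn K n, σ₁.obj i = σ₁p i) (hobj₂ : ∀ i : Cn K m, σ₂.obj i = σ₂p i)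
    (hcomm : σ₁ ⋙ τ = τ ⋙ σ₂) (hx : MapsBasis τ x y) :
    IsGoodBasis σ₁ σ₁p x fun i j => c (τ.obj i) (τ.obj j) := by
  obtain ⟨hy0, hymul, hc0, hyσ, hyorb⟩ := hy
  exact ⟨hx.ne_zero hτ hy0, hx.mul_eq hτ hymul, fun _ _ => hc0 _ _,
    hx.map_cnHom_eq hτ hobj₁ hobj₂ hcomm hyσ,
    fun _ _ hij => hyorb _ _ (hij.map (obj_perm_comm hobj₁ hobj₂ hcomm))⟩

end LinearFunctor

theorem stmt13_general (K : Type) [Field K] (n m : ℕ)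
    (σ₁ : Cn K n ⥤ Cn K n) (σ₂ : Cn K m ⥤ Cn K m)
    (σ₁p : Equiv.Perm (Fin n)) (hobj₁ : ∀ i : Cn K n, σ₁.obj i = σ₁p i)
    (σ₂p : Equiv.Perm (Fin m)) (hobj₂ : ∀ i : Cn K m, σ₂.obj i = σ₂p i)
    (τ : Cn K n ⥤ Cn K m) (hτl : IsKLinearFunctor K τ)
    (hcomm : σ₁ ⋙ τ = τ ⋙ σ₂)
    (y c : Cn K m → Cn K m → K) (hy : IsGoodBasis σ₂ σ₂p y c) :
    ∃! x : Cn K n → Cn K n → K,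
      (∃ a : Cn K n → Cn K n → K, IsGoodBasis σ₁ σ₁p x a) ∧
      ∀ i j : Cn K n,
        τ.map (CnHom j i (x i j)) = CnHom (τ.obj j) (τ.obj i) (y (τ.obj i) (τ.obj j)) := by
  obtain ⟨x, hx, hx_unique⟩ := hτl.existsUnique_mapsBasis y
  exact ⟨x, ⟨⟨_, hy.pullback hτl hobj₁ hobj₂ hcomm hx⟩, hx⟩, fun x' hx' => hx_unique x' hx'.2⟩

/-- **Lemma (good comparison basis).**  Let `σ₁, σ₂` be `K`-linear automorphisms of `𝒞ₙ`,
`𝒞ₘ` and `τ : 𝒞ₙ ⥤ 𝒞ₘ` a `K`-linear functor with `τ σ₁ = σ₂ τ`.  For any good basis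
`(y, c)` for `(𝒞ₘ, σ₂)` there is a unique good basis `x` for `(𝒞ₙ, σ₁)` such that all
transition coefficients of `τ` equal `1`, i.e. `τ (x_{ij}) = y_{τ(i) τ(j)}`. -/
theorem stmt13 (K : Type) [Field K] (n m : ℕ)
    (σ₁ : Cn K n ⥤ Cn K n) (σ₂ : Cn K m ⥤ Cn K m)
    (hσ₁l : IsKLinearFunctor K σ₁) (hσ₂l : IsKLinearFunctor K σ₂)
    (hσ₁a : ∃ F : Cn K n ⥤ Cn K n, σ₁ ⋙ F = 𝟭 (Cn K n) ∧ F ⋙ σ₁ = 𝟭 (Cn K n))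
    (hσ₂a : ∃ F : Cn K m ⥤ Cn K m, σ₂ ⋙ F = 𝟭 (Cn K m) ∧ F ⋙ σ₂ = 𝟭 (Cn K m))
    (σ₁p : Equiv.Perm (Fin n)) (hobj₁ : ∀ i : Cn K n, σ₁.obj i = σ₁p i)
    (σ₂p : Equiv.Perm (Fin m)) (hobj₂ : ∀ i : Cn K m, σ₂.obj i = σ₂p i)
    (τ : Cn K n ⥤ Cn K m) (hτl : IsKLinearFunctor K τ)
    (hcomm : σ₁ ⋙ τ = τ ⋙ σ₂)
    (y c : Cn K m → Cn K m → K) (hy : IsGoodBasis σ₂ σ₂p y c) :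
    ∃! x : Cn K n → Cn K n → K,
      (∃ a : Cn K n → Cn K n → K, IsGoodBasis σ₁ σ₁p x a) ∧
      ∀ i j : Cn K n,
        τ.map (CnHom j i (x i j)) = CnHom (τ.obj j) (τ.obj i) (y (τ.obj i) (τ.obj j)) :=
  stmt13_general K n m σ₁ σ₂ σ₁p hobj₁ σ₂p hobj₂ τ hτl hcomm y c hy
end

section
/- Let σ be a K-linear automorphism of 𝒞ₙ and τ a K-linear autoequivalence of 𝒞ₙ with στ = τσ. Choose a good basis for (𝒞ₙ,σ) and let b_{ij} denote the transition coefficients of τ with respect to this basis. Then for every orbit A of the object permutation of σ, the scalar b_{σ(i)i} is the same for all i ∈ A, and b_{σ(i)i}^{|A|} = 1. -/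
open CategoryTheory

/-- **Lemma (the coefficients `b_{σ(i) i}` are roots of unity).**  Let `σ` be a `K`-linear
automorphism of `𝒞ₙ` and `τ` a commuting `K`-linear autoequivalence.  Choose a good basis
for `(𝒞ₙ, σ)` and let `b` be the transition coefficients of `τ` with respect to it.
Then for every orbit `A` of the object permutation of `σ`, the scalar `b (σ i) i` is the
same for all `i ∈ A`, and its `|A|`-th power is `1`. -/
theorem stmt15 (K : Type) [Field K] (n : ℕ)
    (σ τ : Cn K n ⥤ Cn K n)
    (hσl : IsKLinearFunctor K σ) (hτl : IsKLinearFunctor K τ)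
    (hσa : ∃ σ' : Cn K n ⥤ Cn K n, σ ⋙ σ' = 𝟭 (Cn K n) ∧ σ' ⋙ σ = 𝟭 (Cn K n))
    (hτe : τ.IsEquivalence)
    (hcomm : σ ⋙ τ = τ ⋙ σ)
    (σp : Equiv.Perm (Fin n)) (hobj : ∀ i : Cn K n, σ.obj i = σp i)
    (x a : Cn K n → Cn K n → K) (hx : IsGoodBasis σ σp x a)
    (b : Cn K n → Cn K n → K)
    (hb : ∀ i j : Cn K n, τ.map (CnHom j i (x i j)) =
      CnHom (τ.obj j) (τ.obj i) (b i j * x (τ.obj i) (τ.obj j))) :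
    (∀ i i' : Fin n, SameOrbit σp i i' → b (σp i) i = b (σp i') i') ∧
    (∀ i : Fin n, b (σp i) i ^ orbitSize σp i = 1) := by
  haveI := hτe
  obtain ⟨hx0, hxm, ha0, hσmap, hgood⟩ := hx
  -- basic conversions
  have hsmul : ∀ (X Y : Cn K n) (c r : K), CnHom X Y (c * r) = c • CnHom X Y r :=
    fun _ _ _ _ => rfl
  have hEq1 : ∀ (X Y : Cn K n) (h : X = Y), toK (eqToHom h) = 1 := by
    rintro X Y rfl; rfl
  -- objectwise commutation
  have hoc : ∀ i : Cn K n, τ.obj (σp i) = σp (τ.obj i) := by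
    intro i
    have h := Functor.congr_obj hcomm i
    simp only [Functor.comp_obj] at h
    rw [hobj i, hobj (τ.obj i)] at h
    exact h
  -- value of τ on the basis morphisms at shifted objects
  have hbσ : ∀ i j : Cn K n, toK (τ.map (CnHom (σ.obj j) (σ.obj i) (x (σp i) (σp j)))) =
      b (σp i) (σp j) * x (τ.obj (σp i)) (τ.obj (σp j)) := by
    intro i j
    rw [hobj i, hobj j, hb (σp i) (σp j)]
    rfl
  -- the key commutation identity for coefficients
  have star : ∀ i j : Cn K n, a i j * b (σp i) (σp j) = b i j * a (τ.obj i) (τ.obj j) := by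
    intro i j
    have h1 := Functor.congr_hom hcomm (CnHom j i (x i j))
    have hL : toK ((σ ⋙ τ).map (CnHom j i (x i j))) =
        a i j * (b (σp i) (σp j) * x (σp (τ.obj i)) (σp (τ.obj j))) := by
      have : (σ ⋙ τ).map (CnHom j i (x i j)) = τ.map (σ.map (CnHom j i (x i j))) := rfl
      rw [this, hσmap i j, hsmul, hτl.2]
      show a i j * toK (τ.map (CnHom (σ.obj j) (σ.obj i) (x (σp i) (σp j)))) = _
      rw [hbσ i j, hoc i, hoc j]
    have hR : toK ((τ ⋙ σ).map (CnHom j i (x i j))) =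
        b i j * (a (τ.obj i) (τ.obj j) * x (σp (τ.obj i)) (σp (τ.obj j))) := by
      have : (τ ⋙ σ).map (CnHom j i (x i j)) = σ.map (τ.map (CnHom j i (x i j))) := rfl
      rw [this, hb i j, hsmul, hσl.2]
      show b i j * toK (σ.map (CnHom (τ.obj j) (τ.obj i) (x (τ.obj i) (τ.obj j)))) = _
      rw [hσmap (τ.obj i) (τ.obj j)]
      rfl
    have h2 : toK ((σ ⋙ τ).map (CnHom j i (x i j))) =
        toK (eqToHom (Functor.congr_obj hcomm j)) *
          (toK ((τ ⋙ σ).map (CnHom j i (x i j))) *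
            toK (eqToHom (Functor.congr_obj hcomm i).symm)) := by
      rw [h1]; rfl
    rw [hEq1, hEq1, one_mul, mul_one, hL, hR] at h2
    have hxne : x (σp (τ.obj i)) (σp (τ.obj j)) ≠ 0 := hx0 _ _
    have h3 : (a i j * b (σp i) (σp j)) * x (σp (τ.obj i)) (σp (τ.obj j)) =
        (b i j * a (τ.obj i) (τ.obj j)) * x (σp (τ.obj i)) (σp (τ.obj j)) := by
      rw [mul_assoc, mul_assoc]; exact h2
    exact mul_right_cancel₀ hxne h3
  -- the cocycle identity for b
  have hcoc : ∀ i j k : Cn K n, b i k = b i j * b j k := by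
    intro i j k
    have hcomp : CnHom k j (x j k) ≫ CnHom j i (x i j) = CnHom k i (x i k) := by
      show x j k * x i j = x i k
      rw [mul_comm]; exact hxm i j k
    have h := τ.map_comp (CnHom k j (x j k)) (CnHom j i (x i j))
    rw [hcomp, hb i k, hb j k, hb i j] at h
    have h2 : b i k * x (τ.obj i) (τ.obj k) =
        (b j k * x (τ.obj j) (τ.obj k)) * (b i j * x (τ.obj i) (τ.obj j)) := h
    have h3 : b i k * x (τ.obj i) (τ.obj k) =
        (b i j * b j k) * (x (τ.obj i) (τ.obj j) * x (τ.obj j) (τ.obj k)) := by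
      rw [h2]; ring
    rw [hxm] at h3
    exact mul_right_cancel₀ (hx0 _ _) h3
  -- b is nowhere zero (needs faithfulness of τ)
  haveI : τ.Additive := ⟨fun {X Y f g} => hτl.1 X Y f g⟩
  have hb0 : ∀ i j : Cn K n, b i j ≠ 0 := by
    intro i j hzero
    have h := hb i j
    rw [hzero, zero_mul] at h
    have h0 : τ.map (CnHom j i (x i j)) = τ.map (0 : j ⟶ i) := by
      rw [τ.map_zero]; exact h
    exact hx0 i j (τ.map_injective h0)
  have hbii : ∀ i : Cn K n, b i i = 1 := by
    intro i
    have h := hcoc i i i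
    have h2 : b i i * b i i = b i i * 1 := by rw [mul_one]; exact h.symm
    exact (mul_left_cancel₀ (hb0 i i) h2)
  -- σp i and i are always in the same orbit
  have hsame : ∀ u : Fin n, SameOrbit σp (σp u) u := by
    intro u
    refine ⟨orderOf σp - 1, ?_⟩
    have hpos : 0 < orderOf σp := orderOf_pos σp
    have h1 : (σp ^ (orderOf σp - 1)) (σp u) = (σp ^ (orderOf σp - 1) * σp) u := rfl
    rw [h1, ← pow_succ, Nat.sub_add_cancel hpos, pow_orderOf_eq_one]
    rfl
  -- the step lemma
  have hstep : ∀ m : Cn K n, b (σp (σp m)) (σp m) = b (σp m) m := by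
    intro m
    have h := star (σp m) m
    rw [hgood _ _ (hsame m), one_mul] at h
    have h2 : a (τ.obj (σp m)) (τ.obj m) = 1 := by
      rw [hoc m]; exact hgood _ _ (hsame (τ.obj m))
    rw [h2, mul_one] at h
    exact h
  -- iterated step lemma
  have hiter : ∀ (k : ℕ) (i : Fin n), b (σp ((σp ^ k) i)) ((σp ^ k) i) = b (σp i) i := by
    intro k
    induction k with
    | zero => intro i; simp
    | succ k ih =>
      intro i
      have h1 : (σp ^ (k + 1)) i = (σp ^ k) (σp i) := by
        rw [pow_succ]; rfl
      rw [h1, ih (σp i)]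
      exact hstep i
  -- power lemma
  have hpow : ∀ (k : ℕ) (i : Fin n), b ((σp ^ k) i) i = (b (σp i) i) ^ k := by
    intro k
    induction k with
    | zero => intro i; simpa using hbii i
    | succ k ih =>
      intro i
      have h1 : (σp ^ (k + 1)) i = σp ((σp ^ k) i) := by
        rw [pow_succ']; rfl
      rw [h1, hcoc (σp ((σp ^ k) i)) ((σp ^ k) i) i, hiter k i, ih i, pow_succ]
      ring
  constructor
  · rintro i i' ⟨k, hk⟩
    rw [← hk]
    exact (hiter k i).symm
  · intro i
    -- orbit size equals the minimal period
    have hper : i ∈ Function.periodicPts ⇑σp := by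
      refine ⟨orderOf σp, orderOf_pos σp, ?_⟩
      show (⇑σp)^[orderOf σp] i = i
      rw [Equiv.Perm.iterate_eq_pow, pow_orderOf_eq_one]
      rfl
    set d := Function.minimalPeriod ⇑σp i with hd
    have hdpos : 0 < d := Function.minimalPeriod_pos_of_mem_periodicPts hper
    have hsize : orbitSize σp i = d := by
      show Set.ncard {j | SameOrbit σp i j} = d
      have hset : {j | SameOrbit σp i j} =
          (fun k : ℕ => (σp ^ k) i) '' ↑(Finset.range d) := by
        ext j
        simp only [Set.mem_setOf_eq, Set.mem_image, Finset.coe_range, Set.mem_Iio]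
        constructor
        · rintro ⟨k, rfl⟩
          refine ⟨k % d, Nat.mod_lt _ hdpos, ?_⟩
          have := Function.iterate_mod_minimalPeriod_eq (f := ⇑σp) (x := i) (n := k)
          rw [Equiv.Perm.iterate_eq_pow, Equiv.Perm.iterate_eq_pow] at this
          exact this
        · rintro ⟨k, _, rfl⟩; exact ⟨k, rfl⟩
      rw [hset, Set.ncard_image_of_injOn, Set.ncard_coe_finset, Finset.card_range]
      rw [Finset.coe_range]
      intro s hs t ht hst
      exact Function.iterate_injOn_Iio_minimalPeriod hs ht hst
    have hfix : (σp ^ orbitSize σp i) i = i := by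
      rw [hsize]
      have := Function.iterate_minimalPeriod (f := ⇑σp) (x := i)
      rw [Equiv.Perm.iterate_eq_pow] at this
      exact this
    rw [← hpow (orbitSize σp i) i, hfix, hbii i]
end
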